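/- arXiv:1505.03201 — 2 statements merged into one kernel-verified Lean document; each statement's English description precedes it below -/
import Mathlib

section
/- Let m be even and n ∈ ℕ. Then there exists a constant c > 0 (depending only on m and n) such that for all x, y ∈ ℝ^n, c · ‖x^{*m} + y^{*m}‖ ≥ max{‖x‖^m, ‖y‖^m}. -/
/-- The `m`-fold self-convolution of `x ∈ ℝ^n`. -/
noncomputable def convPow (n m : ℕ) (x : Fin n → ℝ) : Fin ((n - 1) * m + 1) → ℝ :=
  fun i => ∑ f : Fin m → Fin n, if (∑ j, (f j : ℕ)) = (i : ℕ) then ∏ j, x (f j) else 0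

noncomputable def euclNorm {N : ℕ} (z : Fin N → ℝ) : ℝ := Real.sqrt (∑ i, z i ^ 2)

/-!
Both sides are positively homogeneous of degree `m` in `(x, y)`, so it suffices to bound
`‖x^{*m} + y^{*m}‖` away from zero on the compact unit sphere of `ℝ^n × ℝ^n`. It does not vanish
there: pairing with Vandermonde vectors turns `x^{*m} + y^{*m} = 0` into
`⟨x, t⟩^m + ⟨y, t⟩^m = 0` for every `t`, so for even `m` both `⟨x, t⟩` and `⟨y, t⟩` vanish
identically, and `x = y = 0` because Vandermonde matrices with distinct nodes are invertible.
-/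

open Finset

theorem exists_pow_norm_le_mul_of_homogeneous {E : Type*} [NormedAddCommGroup E]
    [NormedSpace ℝ E] [FiniteDimensional ℝ E] {F : E → ℝ} {m : ℕ} (hm : m ≠ 0)
    (hF : Continuous F) (hF_smul : ∀ t : ℝ, 0 ≤ t → ∀ v, F (t • v) = t ^ m * F v)
    (hF_pos : ∀ v, v ≠ 0 → 0 < F v) :
    ∃ c : ℝ, 0 < c ∧ ∀ v, ‖v‖ ^ m ≤ c * F v := by
  have hF_sphere : ∀ u ∈ Metric.sphere (0 : E) 1, 0 < F u := fun u hu =>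
    hF_pos u (ne_zero_of_mem_unit_sphere ⟨u, hu⟩)
  obtain ⟨C, hC⟩ := (isCompact_sphere (0 : E) 1).exists_bound_of_continuousOn
    (hF.continuousOn.inv₀ fun u hu => (hF_sphere u hu).ne')
  refine ⟨max C 1, by positivity, fun v => ?_⟩
  rcases eq_or_ne v 0 with rfl | hv
  · have hF_zero : F 0 = 0 := by simpa [zero_pow hm] using hF_smul 0 le_rfl 0
    simp [hF_zero, zero_pow hm]
  set u := ‖v‖⁻¹ • v
  have hu : u ∈ Metric.sphere (0 : E) 1 := by simp [u, norm_smul, hv]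
  have hFv : F v = ‖v‖ ^ m * F u := by
    rw [← hF_smul _ (norm_nonneg v), smul_inv_smul₀ (norm_ne_zero_iff.mpr hv)]
  have hFu_ge : 1 ≤ max C 1 * F u := by
    have : (F u)⁻¹ ≤ max C 1 := (Real.le_norm_self _).trans ((hC u hu).trans (le_max_left C 1))
    rwa [inv_le_iff_one_le_mul₀ (hF_sphere u hu)] at this
  calc ‖v‖ ^ m ≤ ‖v‖ ^ m * (max C 1 * F u) := le_mul_of_one_le_right (by positivity) hFu_ge
    _ = max C 1 * F v := by rw [hFv]; ring

theorem eq_zero_of_forall_sum_mul_pow_eq_zero {R : Type*} [CommRing R] [IsDomain R] [CharZero R]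
    {n : ℕ} (x : Fin n → R) (h : ∀ t : R, ∑ j, x j * t ^ (j : ℕ) = 0) : x = 0 := by
  have hdet : (Matrix.vandermonde fun i : Fin n => (i : R)).det ≠ 0 :=
    Matrix.det_vandermonde_ne_zero_iff.mpr fun i j hij => Fin.ext (by exact_mod_cast hij)
  refine Matrix.eq_zero_of_mulVec_eq_zero hdet (funext fun i => ?_)
  simpa [Matrix.mulVec, dotProduct, mul_comm] using h i

theorem sum_convPow_mul_pow (n m : ℕ) (x : Fin n → ℝ) (t : ℝ) :
    ∑ i, convPow n m x i * t ^ (i : ℕ) = (∑ j, x j * t ^ (j : ℕ)) ^ m := by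
  simp only [convPow, Fintype.sum_pow, sum_mul, ite_mul, zero_mul]
  rw [sum_comm]
  refine sum_congr rfl fun f _ => ?_
  have hf : ∑ j, (f j : ℕ) < (n - 1) * m + 1 := by
    calc ∑ j, (f j : ℕ) ≤ ∑ _j : Fin m, (n - 1) :=
          sum_le_sum fun j _ => Nat.le_sub_one_of_lt (f j).isLt
      _ = (n - 1) * m := by simp [mul_comm]
      _ < (n - 1) * m + 1 := Nat.lt_succ_self _
  rw [sum_eq_single (⟨_, hf⟩ : Fin ((n - 1) * m + 1))]
  · simp [prod_mul_distrib, prod_pow_eq_pow_sum]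
  · exact fun i _ hi => if_neg fun h => hi (Fin.ext h.symm)
  · exact fun h => absurd (mem_univ _) h

theorem convPow_smul (n m : ℕ) (c : ℝ) (x : Fin n → ℝ) :
    convPow n m (c • x) = c ^ m • convPow n m x := by
  funext i
  simp only [convPow, Pi.smul_apply, smul_eq_mul, mul_sum, mul_ite, mul_zero,
    prod_mul_distrib, prod_const, card_univ, Fintype.card_fin]

theorem continuous_convPow (n m : ℕ) : Continuous (convPow n m) :=
  continuous_pi fun i => continuous_finsetSum _ fun f _ => by split_ifs <;> fun_prop

theorem convPow_zero (n : ℕ) (x : Fin n → ℝ) : convPow n 0 x = 1 := by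
  funext i
  simp [convPow]

theorem eq_zero_of_convPow_add_convPow_eq_zero {n m : ℕ} (hm : Even m) (hm0 : m ≠ 0)
    {x y : Fin n → ℝ} (h : convPow n m x + convPow n m y = 0) : x = 0 := by
  refine eq_zero_of_forall_sum_mul_pow_eq_zero x fun t => (pow_eq_zero_iff hm0).mp ?_
  have hsum : (∑ j, x j * t ^ (j : ℕ)) ^ m + (∑ j, y j * t ^ (j : ℕ)) ^ m = 0 := by
    simpa only [Pi.add_apply, add_mul, sum_add_distrib, sum_convPow_mul_pow, Pi.zero_apply,
      zero_mul, sum_const_zero] using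
      congrArg (fun z : Fin ((n - 1) * m + 1) → ℝ => ∑ i, z i * t ^ (i : ℕ)) h
  linarith [hm.pow_nonneg (∑ j, x j * t ^ (j : ℕ)), hm.pow_nonneg (∑ j, y j * t ^ (j : ℕ))]

theorem euclNorm_eq_norm {N : ℕ} (z : Fin N → ℝ) : euclNorm z = ‖WithLp.toLp 2 z‖ := by
  simp [euclNorm, EuclideanSpace.norm_eq]

/-- For even `m` there is `c > 0` such that
`c ⬝ ‖x^{*m} + y^{*m}‖ ≥ max {‖x‖^m, ‖y‖^m}` for all `x, y ∈ ℝ^n`. -/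
theorem convPow_sum_coercive (n m : ℕ) (hm : Even m) :
    ∃ c : ℝ, 0 < c ∧ ∀ x y : Fin n → ℝ,
      max (euclNorm x ^ m) (euclNorm y ^ m) ≤ c * euclNorm (convPow n m x + convPow n m y) := by
  rcases eq_or_ne m 0 with rfl | hm0
  · exact ⟨1, one_pos, fun x y => by simp [convPow_zero, euclNorm]⟩
  set F : EuclideanSpace ℝ (Fin n) × EuclideanSpace ℝ (Fin n) → ℝ :=
    fun p => ‖WithLp.toLp 2 (convPow n m p.1.ofLp + convPow n m p.2.ofLp)‖
  have hF : Continuous F := by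
    have := continuous_convPow n m
    fun_prop
  have hF_smul : ∀ t : ℝ, 0 ≤ t → ∀ p, F (t • p) = t ^ m * F p := fun t ht p => by
    simp [F, convPow_smul, ← smul_add, norm_smul, abs_of_nonneg ht]
  have hF_pos : ∀ p, p ≠ 0 → 0 < F p := fun p hp => norm_pos_iff.mpr fun h => hp <| by
    rw [WithLp.toLp_eq_zero] at h
    have hx := eq_zero_of_convPow_add_convPow_eq_zero hm hm0 h
    have hy := eq_zero_of_convPow_add_convPow_eq_zero hm hm0 ((add_comm _ _).trans h)
    rw [WithLp.ofLp_eq_zero] at hx hy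
    exact Prod.ext hx hy
  obtain ⟨c, hc, hbound⟩ := exists_pow_norm_le_mul_of_homogeneous hm0 hF hF_smul hF_pos
  refine ⟨c, hc, fun x y => ?_⟩
  simp only [euclNorm_eq_norm]
  rw [← (pow_left_monotoneOn (n := m)).map_max (norm_nonneg _) (norm_nonneg _), ← Prod.norm_mk]
  exact hbound (WithLp.toLp 2 x, WithLp.toLp 2 y)
end

section
/- Let m be even and u_0, ..., u_{(n-1)m} ∈ ℝ pairwise distinct, u_k = (1, u_k, ..., u_k^{n-1}). Let G = {α : Σ_k α_k u_k^{⊗m} is PSD} and H = {(A u_0^m, ..., A u_{(n-1)m}^m) : A ∈ U_{m,n}}, where U_{m,n} = conv{x^{⊗m} : x ∈ ℝ^n}. Then H* = G, i.e., α ∈ ℝ^{(n-1)m+1} satisfies ⟨α, h⟩ ≥ 0 for all h ∈ H if and only if Σ_k α_k u_k^{⊗m} is PSD. -/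
/-- The rank-one symmetric tensor `u^{⊗m}`, with entries `u_{i₁} ⋯ u_{i_m}`. -/
noncomputable def tpow (n m : ℕ) (u : Fin n → ℝ) : (Fin m → Fin n) → ℝ :=
  fun f => ∏ j, u (f j)

/-- Evaluation `A x^m = ∑ a_{i₁…i_m} x_{i₁} ⋯ x_{i_m}` of an order-`m` tensor. -/
noncomputable def teval (n m : ℕ) (A : (Fin m → Fin n) → ℝ) (x : Fin n → ℝ) : ℝ :=
  ∑ f : Fin m → Fin n, A f * ∏ j, x (f j)

/-- The Vandermonde vector `(1, c, …, c^{n-1}) ∈ ℝ^n`. -/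
noncomputable def vand (n : ℕ) (c : ℝ) : Fin n → ℝ := fun i => c ^ (i : ℕ)

/-!
Pairing `α` with `(A u_k^m)_k` is the same as pairing `A` with the tensor `∑_k α_k u_k^{⊗m}`.
Hence `H*` is the preimage of `U_{m,n}* = PSD_{m,n}` under `α ↦ ∑_k α_k u_k^{⊗m}`, and the duality
itself holds because a linear functional is nonnegative on a convex hull as soon as it is
nonnegative on the generators `x^{⊗m}`.
-/

theorem forall_mem_convexHull_nonneg_iff {E : Type*} [AddCommGroup E] [Module ℝ E]
    (φ : E →ₗ[ℝ] ℝ) (S : Set E) :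
    (∀ A ∈ convexHull ℝ S, 0 ≤ φ A) ↔ ∀ B ∈ S, 0 ≤ φ B :=
  ((convex_Ici 0).linear_preimage φ).convexHull_subset_iff

theorem teval_eq_dotProduct_tpow (n m : ℕ) (A : (Fin m → Fin n) → ℝ) (x : Fin n → ℝ) :
    teval n m A x = A ⬝ᵥ tpow n m x := rfl

theorem sum_mul_teval {ι : Type*} [Fintype ι] (n m : ℕ) (α : ι → ℝ) (v : ι → Fin n → ℝ)
    (A : (Fin m → Fin n) → ℝ) :
    ∑ k, α k * teval n m A (v k) = A ⬝ᵥ ∑ k, α k • tpow n m (v k) := by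
  simp only [teval_eq_dotProduct_tpow, dotProduct_sum, dotProduct_smul, smul_eq_mul]

theorem forall_mem_convexHull_tpow_dotProduct_nonneg_iff (n m : ℕ) (T : (Fin m → Fin n) → ℝ) :
    (∀ A ∈ convexHull ℝ {B | ∃ x : Fin n → ℝ, B = tpow n m x}, 0 ≤ A ⬝ᵥ T) ↔
      ∀ x, 0 ≤ teval n m T x := by
  refine (forall_mem_convexHull_nonneg_iff ((dotProductBilin ℝ ℝ).flip T) _).trans ?_
  simp [teval_eq_dotProduct_tpow, dotProduct_comm]

theorem dual_H_eq_G_general (n m : ℕ)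
    (u : Fin ((n - 1) * m + 1) → ℝ)
    (H : Set (Fin ((n - 1) * m + 1) → ℝ))
    (hH : H = {h | ∃ A ∈ convexHull ℝ {B : (Fin m → Fin n) → ℝ | ∃ x : Fin n → ℝ, B = tpow n m x},
      h = fun k => teval n m A (vand n (u k))}) :
    ∀ α : Fin ((n - 1) * m + 1) → ℝ,
      (∀ h ∈ H, 0 ≤ ∑ k, α k * h k) ↔
        ∀ x : Fin n → ℝ, 0 ≤ teval n m (∑ k, α k • tpow n m (vand n (u k))) x := by
  intro α
  subst hH
  rw [← forall_mem_convexHull_tpow_dotProduct_nonneg_iff]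
  constructor
  · intro hα A hA
    rw [← sum_mul_teval]
    exact hα _ ⟨A, hA, rfl⟩
  · rintro hα _ ⟨A, hA, rfl⟩
    rw [sum_mul_teval]
    exact hα A hA

/-- `H* = G`: a vector `α` pairs nonnegatively with all of
`H = {(A u_0^m, …, A u_{(n-1)m}^m) : A ∈ U_{m,n}}` iff `∑_k α_k u_k^{⊗m}` is PSD. -/
theorem dual_H_eq_G (n m : ℕ) (hm : Even m)
    (u : Fin ((n - 1) * m + 1) → ℝ) (hu : Function.Injective u)
    (H : Set (Fin ((n - 1) * m + 1) → ℝ))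
    (hH : H = {h | ∃ A ∈ convexHull ℝ {B : (Fin m → Fin n) → ℝ | ∃ x : Fin n → ℝ, B = tpow n m x},
      h = fun k => teval n m A (vand n (u k))}) :
    ∀ α : Fin ((n - 1) * m + 1) → ℝ,
      (∀ h ∈ H, 0 ≤ ∑ k, α k * h k) ↔
        ∀ x : Fin n → ℝ, 0 ≤ teval n m (∑ k, α k • tpow n m (vand n (u k))) x :=
  dual_H_eq_G_general n m u H hH
end
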